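/- Let (E, D) be a semistable pseudo-root (canonical polarization of degree g-1) on a connected weighted graph Γ, and let V be a proper subset of V(Γ) with β_D(V) = 0 (here E = ∅ for simplicity). Let Γ₁ = Γ(V), Γ₂ = Γ(V^c) be the induced subgraphs, D₁ = D|_{Γ₁}, and D₂ = D|_{Γ₂} - Σ_{v∈V^c} deg_{E(V,V^c)}(v)·v. Then (Γᵢ, ∅, Dᵢ) is a semistable root-graph on Γᵢ with respect to the canonical polarization μᵢ(v) = μ(v) - deg_{E(V,V^c)}(v)/2 of Γᵢ, for i = 1, 2. That is: 2Dᵢ + Div(φ|_{Γᵢ}) = K_{Γᵢ}, φ|_{Γᵢ} is acyclic, and Dᵢ is μᵢ-semistable. -/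

import Mathlib

/-! A common framework for weighted multigraphs, divisors, flows,
subdivisions, pseudo-divisors and specializations, following
"The moduli space of quasistable spin curves". -/

noncomputable section

/-- A finite weighted multigraph (with a reference orientation of each edge). -/
structure WGraph where
  V : Type
  E : Type
  [fintV : Fintype V]
  [decV : DecidableEq V]
  [fintE : Fintype E]
  [decE : DecidableEq E]
  src : E → V
  tgt : E → V
  w : V → ℕ

namespace WGraph

attribute [instance] WGraph.fintV WGraph.decV WGraph.fintE WGraph.decE

attribute [local instance] Classical.propDecidable

variable (G : WGraph)

/-- Degree of a vertex (loops count twice). -/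
def deg (v : G.V) : ℕ :=
  (Finset.univ.filter (fun e => G.src e = v)).card +
    (Finset.univ.filter (fun e => G.tgt e = v)).card

/-- Degree of a vertex in the edge set `A` (loops count twice). -/
def degIn (A : Finset G.E) (v : G.V) : ℕ :=
  (A.filter (fun e => G.src e = v)).card + (A.filter (fun e => G.tgt e = v)).card

/-- Canonical divisor: `K(v) = 2 w(v) - 2 + deg(v)`. -/
def K (v : G.V) : ℤ := 2 * (G.w v : ℤ) - 2 + (G.deg v : ℤ)

/-- Canonical polarization of degree `g - 1`. -/
def canPol (v : G.V) : ℚ := (G.K v : ℚ) / 2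

/-- Oriented edges: `(e, true)` is `src → tgt`, `(e, false)` is the reverse. -/
abbrev OEdge := G.E × Bool

def osrc (oe : G.OEdge) : G.V := if oe.2 then G.src oe.1 else G.tgt oe.1

def otgt (oe : G.OEdge) : G.V := if oe.2 then G.tgt oe.1 else G.src oe.1

/-- A flow is recorded by its values along the reference orientation;
`flowVal` gives its value on an oriented edge. -/
def flowVal (φ : G.E → ℤ) (oe : G.OEdge) : ℤ := if oe.2 then φ oe.1 else -φ oe.1

/-- The divisor of a flow: `Div(φ)(v) = ∑_{t(e) = v} φ(e)` over oriented edges. -/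
def divOf (φ : G.E → ℤ) (v : G.V) : ℤ :=
  (∑ e : G.E, if G.tgt e = v then φ e else 0) -
    ∑ e : G.E, if G.src e = v then φ e else 0

/-- `e` has exactly one endpoint in `W`. -/
def crossing (W : Finset G.V) (e : G.E) : Prop := (G.src e ∈ W) ≠ (G.tgt e ∈ W)

/-- Number of edges between `W` and its complement. -/
def delta (W : Finset G.V) : ℕ := (Finset.univ.filter (fun e => G.crossing W e)).card

/-- `β_D(W) = deg(D|_W) - μ(W) + δ_W / 2`. -/
def beta (μ : G.V → ℚ) (D : G.V → ℤ) (W : Finset G.V) : ℚ :=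
  (∑ v ∈ W, (D v : ℚ)) - (∑ v ∈ W, μ v) + (G.delta W : ℚ) / 2

def Semistable (μ : G.V → ℚ) (D : G.V → ℤ) : Prop :=
  ∀ W : Finset G.V, W ≠ Finset.univ → 0 ≤ G.beta μ D W

def Stable (μ : G.V → ℚ) (D : G.V → ℤ) : Prop :=
  ∀ W : Finset G.V, W ≠ Finset.univ → W.Nonempty → 0 < G.beta μ D W

def Quasistable (μ : G.V → ℚ) (v₀ : G.V) (D : G.V → ℤ) : Prop :=
  ∀ W : Finset G.V, W ≠ Finset.univ →
    (0 ≤ G.beta μ D W ∧ (v₀ ∈ W → 0 < G.beta μ D W))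

/-- An oriented cycle: a nonempty cyclically closed chain of oriented edges,
with pairwise distinct underlying edges and pairwise distinct vertices. -/
def IsOrientedCycle (c : List G.OEdge) : Prop :=
  c ≠ [] ∧ (c.map Prod.fst).Nodup ∧ (c.map G.osrc).Nodup ∧
    ∀ i : Fin c.length,
      G.otgt (c.get i) = G.osrc (c.get ⟨((i : ℕ) + 1) % c.length, Nat.mod_lt _ i.pos⟩)

/-- A flow is acyclic if there is no oriented cycle on which it is
nonnegative and somewhere positive. -/
def Acyclic (φ : G.E → ℤ) : Prop :=
  ¬∃ c : List G.OEdge, G.IsOrientedCycle c ∧ (∀ oe ∈ c, 0 ≤ G.flowVal φ oe) ∧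
      ∃ oe ∈ c, 0 < G.flowVal φ oe

/-- Adjacency through an edge of `A`. -/
def adjVia (A : Finset G.E) (a b : G.V) : Prop :=
  ∃ e ∈ A, (G.src e = a ∧ G.tgt e = b) ∨ (G.src e = b ∧ G.tgt e = a)

/-- Reachability using only edges of `A`. -/
def ReachVia (A : Finset G.E) : G.V → G.V → Prop := Relation.ReflTransGen (G.adjVia A)

def Connected : Prop := Nonempty G.V ∧ ∀ u v : G.V, G.ReachVia Finset.univ u v

/-- A cyclic subgraph: a set of edges in which every vertex has even degree. -/
def IsCyclicSubgraph (P : Finset G.E) : Prop := ∀ v : G.V, Even (G.degIn P v)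

/-- The characteristic flow of a vertex. -/
def charFlow (v₀ : G.V) (e : G.E) : ℤ :=
  if G.src e = v₀ ∧ G.tgt e ≠ v₀ then 1
  else if G.tgt e = v₀ ∧ G.src e ≠ v₀ then -1 else 0

/-- `Div(v₀)`, the principal divisor attached to a vertex. -/
def DivV (v₀ : G.V) : G.V → ℤ := G.divOf (G.charFlow v₀)

/-- Principal divisors are integer combinations of the `Div(v)`. -/
def Principal (D : G.V → ℤ) : Prop :=
  ∃ a : G.V → ℤ, ∀ v, D v = ∑ u : G.V, a u * G.DivV u v

/-- Number of connected components of the subgraph with all vertices and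
edge set `A`. -/
def numComponents (A : Finset G.E) : ℕ :=
  (Finset.univ.image (fun v => Finset.univ.filter (fun u => G.ReachVia A v u))).card

/-- The subdivision `Γ^S`: one exceptional vertex inserted in each edge of `S`. -/
def subdiv (S : Finset G.E) : WGraph where
  V := G.V ⊕ {e // e ∈ S}
  E := {e // e ∉ S} ⊕ {e // e ∈ S} × Bool
  src := fun x =>
    match x with
    | .inl e => .inl (G.src e.1)
    | .inr (e, b) => if b then .inr e else .inl (G.src e.1)
  tgt := fun x =>
    match x with
    | .inl e => .inl (G.tgt e.1)
    | .inr (e, b) => if b then .inl (G.tgt e.1) else .inr e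
  w := fun v =>
    match v with
    | .inl v => G.w v
    | .inr _ => 0

/-- A pseudo-divisor: value `-1` on every exceptional vertex. -/
def IsPseudoDivisor (S : Finset G.E) (D : (G.subdiv S).V → ℤ) : Prop :=
  ∀ x : {e // e ∈ S}, D (Sum.inr x) = -1

/-- A pseudo-root: `2 D + Div(φ) = K_{Γ^S}` for some acyclic flow `φ` on `Γ^S`. -/
def IsPseudoRoot (S : Finset G.E) (D : (G.subdiv S).V → ℤ) : Prop :=
  G.IsPseudoDivisor S D ∧
    ∃ φ : (G.subdiv S).E → ℤ, (G.subdiv S).Acyclic φ ∧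
      ∀ v, 2 * D v + (G.subdiv S).divOf φ v = (G.subdiv S).K v

/-- Semistability of a pseudo-divisor: semistability on the subdivision with
respect to the (extended) canonical polarization. -/
def IsSemistablePR (S : Finset G.E) (D : (G.subdiv S).V → ℤ) : Prop :=
  (G.subdiv S).Semistable (G.subdiv S).canPol D

/-- `β_{E,D}` for pseudo-divisors, on subsets of the original vertices. -/
def betaPoly (S : Finset G.E) (D : (G.subdiv S).V → ℤ) (W : Finset G.V) : ℚ :=
  (∑ v ∈ W, (D (Sum.inl v) : ℚ)) -
    (∑ v ∈ W, (G.canPol v + (G.degIn S v : ℚ) / 2)) +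
    ((Finset.univ.filter (fun e => e ∉ S ∧ G.crossing W e)).card : ℚ) / 2

/-- Polystability of a pseudo-divisor. -/
def IsPolystable (S : Finset G.E) (D : (G.subdiv S).V → ℤ) : Prop :=
  ∀ W : Finset G.V,
    0 ≤ G.betaPoly S D W ∧ ((∃ e, e ∉ S ∧ G.crossing W e) → 0 < G.betaPoly S D W)

/-- The divisor `D_P` attached to a cyclic subgraph `P`, on `Γ^{E_P}` with
`E_P = Pᶜ`. -/
def DP (P : Finset G.E) : (G.subdiv Pᶜ).V → ℤ := fun x =>
  match x with
  | .inl v => (G.deg v : ℤ) - (G.degIn P v : ℤ) / 2 - 1 + (G.w v : ℤ)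
  | .inr _ => -1

/-- The data of a semistable root-graph together with its acyclic flow. -/
def IsSemistableRootTriple (S : Finset G.E) (D : (G.subdiv S).V → ℤ)
    (φ : (G.subdiv S).E → ℤ) : Prop :=
  G.IsPseudoDivisor S D ∧ G.IsSemistablePR S D ∧ (G.subdiv S).Acyclic φ ∧
    ∀ v, 2 * D v + (G.subdiv S).divOf φ v = (G.subdiv S).K v

/-- The induced subgraph on a vertex set `W`. -/
def induce (W : Finset G.V) : WGraph where
  V := {v // v ∈ W}
  E := {e // G.src e ∈ W ∧ G.tgt e ∈ W}
  src := fun e => ⟨G.src e.1, e.2.1⟩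
  tgt := fun e => ⟨G.tgt e.1, e.2.2⟩
  w := fun v => G.w v.1

/-- Number of edges between `W` and `Wᶜ` incident to `v`. -/
def degCross (W : Finset G.V) (v : G.V) : ℕ :=
  (Finset.univ.filter (fun e => G.src e = v ∧ G.crossing W e)).card +
    (Finset.univ.filter (fun e => G.tgt e = v ∧ G.crossing W e)).card

/-- A specialization (iterated edge contraction) of weighted graphs. -/
structure Spec (G G' : WGraph) where
  vmap : G.V → G'.V
  emap : G'.E → G.E
  emap_inj : Function.Injective emap
  vmap_surj : Function.Surjective vmap
  src_comm : ∀ e', vmap (G.src (emap e')) = G'.src e'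
  tgt_comm : ∀ e', vmap (G.tgt (emap e')) = G'.tgt e'
  contract_eq : ∀ e : G.E, e ∉ Finset.univ.image emap → vmap (G.src e) = vmap (G.tgt e)
  fiber_conn : ∀ u v : G.V, vmap u = vmap v →
    Relation.ReflTransGen
      (fun a b => ∃ e, e ∉ Finset.univ.image emap ∧
        ((G.src e = a ∧ G.tgt e = b) ∨ (G.src e = b ∧ G.tgt e = a))) u v
  weight_eq : ∀ v' : G'.V,
    (G'.w v' : ℤ) =
      (∑ v ∈ Finset.univ.filter (fun v => vmap v = v'), (G.w v : ℤ)) +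
        ((Finset.univ.filter (fun e : G.E =>
            e ∉ Finset.univ.image emap ∧ vmap (G.src e) = v')).card : ℤ) -
        ((Finset.univ.filter (fun v : G.V => vmap v = v')).card : ℤ) + 1

/-- Pushforward of a divisor along a specialization. -/
def Spec.pushDiv {G G' : WGraph} (σ : Spec G G') (D : G.V → ℤ) : G'.V → ℤ :=
  fun v' => ∑ v ∈ Finset.univ.filter (fun v => σ.vmap v = v'), D v

/-- Pushforward of a polarization along a specialization. -/
def Spec.pushPol {G G' : WGraph} (σ : Spec G G') (μ : G.V → ℚ) : G'.V → ℚ :=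
  fun v' => ∑ v ∈ Finset.univ.filter (fun v => σ.vmap v = v'), μ v

/-- The induced map on vertices of subdivisions. -/
def Spec.subdivVmap {G G' : WGraph} (σ : Spec G G') (S : Finset G.E)
    (S' : Finset G'.E) : (G.subdiv S).V → (G'.subdiv S').V := fun x =>
  match x with
  | .inl v => .inl (σ.vmap v)
  | .inr e =>
    if h : ∃ e' : {e' // e' ∈ S'}, σ.emap e'.1 = e.1 then .inr h.choose
    else .inl (σ.vmap (G.src e.1))

/-- Pushforward of a pseudo-divisor (its divisor part) along a specialization. -/
def Spec.pushSubdivDiv {G G' : WGraph} (σ : Spec G G') (S : Finset G.E)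
    (S' : Finset G'.E) (D : (G.subdiv S).V → ℤ) : (G'.subdiv S').V → ℤ := fun y =>
  ∑ x ∈ Finset.univ.filter (fun x => σ.subdivVmap S S' x = y), D x

/-- Extension by zero along the edge injection of a specialization. -/
def Spec.extendBy {G G' : WGraph} (σ : Spec G G') (x : G'.E → ℝ) : G.E → ℝ :=
  fun e => if h : ∃ e', σ.emap e' = e then x h.choose else 0

/-- Same-graph contraction of subdivisions (for `S ⊆ S'`): the vertex map.
`σb e` selects the endpoint to which the exceptional vertex of a contracted
edge `e ∈ S' \ S` is merged (`true` = target, `false` = source). -/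
def contrVmap (S S' : Finset G.E) (σb : G.E → Bool) :
    (G.subdiv S').V → (G.subdiv S).V := fun x =>
  match x with
  | .inl v => .inl v
  | .inr e =>
    if h : e.1 ∈ S then .inr ⟨e.1, h⟩
    else .inl (if σb e.1 then G.tgt e.1 else G.src e.1)

/-- Same-graph contraction of subdivisions: the edge injection. -/
def contrEmap (S S' : Finset G.E) (hSS : S ⊆ S') (σb : G.E → Bool) :
    (G.subdiv S).E → (G.subdiv S').E := fun x =>
  match x with
  | .inl e =>
    if h : e.1 ∈ S' then .inr (⟨e.1, h⟩, !σb e.1) else .inl ⟨e.1, h⟩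
  | .inr eb => .inr (⟨eb.1.1, hSS eb.1.2⟩, eb.2)

/-- Specialization of pseudo-divisors over a fixed graph. -/
def PDSpec (S' : Finset G.E) (D' : (G.subdiv S').V → ℤ) (S : Finset G.E)
    (D : (G.subdiv S).V → ℤ) : Prop :=
  S ⊆ S' ∧ ∃ σb : G.E → Bool,
    ∀ v, D v = ∑ x ∈ Finset.univ.filter (fun x => G.contrVmap S S' σb x = v), D' x

/-- Specialization of semistable root-graphs over a fixed graph: a
specialization of pseudo-divisors pushing the acyclic flow forward. -/
def RootSpec (S' : Finset G.E) (D' : (G.subdiv S').V → ℤ) (S : Finset G.E)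
    (D : (G.subdiv S).V → ℤ) : Prop :=
  ∃ hSS : S ⊆ S', ∃ σb : G.E → Bool,
    (∀ v, D v = ∑ x ∈ Finset.univ.filter (fun x => G.contrVmap S S' σb x = v), D' x) ∧
    ∀ φ' φ : _, (G.subdiv S').Acyclic φ' →
      (∀ v, 2 * D' v + (G.subdiv S').divOf φ' v = (G.subdiv S').K v) →
      (G.subdiv S).Acyclic φ →
      (∀ v, 2 * D v + (G.subdiv S).divOf φ v = (G.subdiv S).K v) →
      ∀ x, φ x = φ' (G.contrEmap S S' hSS σb x)

/-- Underlying edge of `Γ` of an edge of `Γ^S`. -/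
def underE (S : Finset G.E) : (G.subdiv S).E → G.E := fun x =>
  match x with
  | .inl e => e.1
  | .inr eb => eb.1.1

/-- A specialization of triples `(Γ, E, D) ≥ (Γ', E', D')`. -/
structure TripleSpec (G : WGraph) (S : Finset G.E) (D : (G.subdiv S).V → ℤ)
    (G' : WGraph) (S' : Finset G'.E) (D' : (G'.subdiv S').V → ℤ) where
  base : Spec G G'
  sub : Spec (G.subdiv S) (G'.subdiv S')
  vcomm : ∀ v : G.V, sub.vmap (Sum.inl v) = Sum.inl (base.vmap v)
  ecomm : ∀ x : (G'.subdiv S').E, G.underE S (sub.emap x) = base.emap (G'.underE S' x)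
  edges_sub : ∀ e' ∈ S', base.emap e' ∈ S
  push_eq : ∀ y, D' y = ∑ x ∈ Finset.univ.filter (fun x => sub.vmap x = y), D x

/-- A triple specialization is a specialization of root-graphs when it pushes
the (unique) acyclic flows forward. -/
def TripleSpec.IsRootSpec {G : WGraph} {S : Finset G.E} {D : (G.subdiv S).V → ℤ}
    {G' : WGraph} {S' : Finset G'.E} {D' : (G'.subdiv S').V → ℤ}
    (T : TripleSpec G S D G' S' D') : Prop :=
  ∀ φ φ', (G.subdiv S).Acyclic φ →
    (∀ v, 2 * D v + (G.subdiv S).divOf φ v = (G.subdiv S).K v) →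
    (G'.subdiv S').Acyclic φ' →
    (∀ v, 2 * D' v + (G'.subdiv S').divOf φ' v = (G'.subdiv S').K v) →
    ∀ x, φ' x = φ (T.sub.emap x)

/-- The cone `λ` attached to a flow: nonnegative orthant cut by the cycle
equations. -/
def lambdaSet (φ : G.E → ℤ) : Set (G.E → ℝ) :=
  {x | (∀ e, 0 ≤ x e) ∧ ∀ c : List G.OEdge, G.IsOrientedCycle c →
      ((c.map (fun oe => (G.flowVal φ oe : ℝ) * x oe.1)).sum) = 0}

/-- Its relative interior (intersection with the positive orthant). -/
def lambdaInt (φ : G.E → ℤ) : Set (G.E → ℝ) :=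
  {x | (∀ e, 0 < x e) ∧ ∀ c : List G.OEdge, G.IsOrientedCycle c →
      ((c.map (fun oe => (G.flowVal φ oe : ℝ) * x oe.1)).sum) = 0}

/-- Faces of a cone (supporting-hyperplane definition). -/
def IsFaceOf (F C : Set (G.E → ℝ)) : Prop :=
  F = C ∨ ∃ l : (G.E → ℝ) →ₗ[ℝ] ℝ, (∀ x ∈ C, 0 ≤ l x) ∧ F = C ∩ {x | l x = 0}

/-- Facets: faces of codimension one. -/
def IsFacetOf (F C : Set (G.E → ℝ)) : Prop :=
  G.IsFaceOf F C ∧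
    Module.finrank ℝ (Submodule.span ℝ F) + 1 = Module.finrank ℝ (Submodule.span ℝ C)

/-- The vector `u_V` spanning the subspace `L_E`. -/
def uVec (S : Finset G.E) (W : Finset G.V) : (G.subdiv S).E → ℝ := fun x =>
  match x with
  | .inl _ => 0
  | .inr eb =>
    if G.crossing W eb.1.1 then
      (if (if eb.2 then G.tgt eb.1.1 else G.src eb.1.1) ∈ W then 1 else -1)
    else 0

/-- The subspace `L_E ⊆ ℝ^{E(Γ^S)}`. -/
def LSub (S : Finset G.E) : Submodule ℝ ((G.subdiv S).E → ℝ) :=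
  Submodule.span ℝ {u | ∃ W : Finset G.V, (∀ e, G.crossing W e → e ∈ S) ∧ u = G.uVec S W}

/-- The diagonal map `δ_E : ℝ^{E(Γ)} → ℝ^{E(Γ^S)}`. -/
def deltaMap (S : Finset G.E) (x : G.E → ℝ) : (G.subdiv S).E → ℝ := fun e' =>
  match e' with
  | .inl e => x e.1
  | .inr eb => x eb.1.1

/-- One step of a `φ`-path avoiding the edges of `A`. -/
def phiStep (φ : G.E → ℤ) (A : Finset G.E) (a b : G.V) : Prop :=
  ∃ oe : G.OEdge, oe.1 ∉ A ∧ 0 ≤ G.flowVal φ oe ∧ G.osrc oe = a ∧ G.otgt oe = b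

/-- Reachability by `φ`-paths avoiding the edges of `A`. -/
def PhiReach (φ : G.E → ℤ) (A : Finset G.E) : G.V → G.V → Prop :=
  Relation.ReflTransGen (G.phiStep φ A)

/-- The refinement of `Γ` inserting `m e` vertices in the interior of each
edge `e`. -/
def refine (m : G.E → ℕ) : WGraph where
  V := G.V ⊕ (Σ e : G.E, Fin (m e))
  E := Σ e : G.E, Fin (m e + 1)
  src := fun x =>
    if h : (x.2 : ℕ) = 0 then .inl (G.src x.1)
    else .inr ⟨x.1, ⟨(x.2 : ℕ) - 1, by have := x.2.isLt; omega⟩⟩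
  tgt := fun x =>
    if h : (x.2 : ℕ) = m x.1 then .inl (G.tgt x.1)
    else .inr ⟨x.1, ⟨(x.2 : ℕ), by have := x.2.isLt; omega⟩⟩
  w := fun v =>
    match v with
    | .inl v => G.w v
    | .inr _ => 0

end WGraph

attribute [local instance] Classical.propDecidable

/-! Everything rests on one fact: every edge between `W` and `Wᶜ` carries flow exactly `1`
into `W`. Summing `2D + Div(φ) = K` over a vertex set `U` shows that the net inflow of `φ`
into `U` is `δ_U - 2 β_D(U)`, so semistability bounds it by `δ_U`, with equality for `U = W`.
Each edge carries flow at most `1`: if an oriented edge `oe` carried `≥ 2`, let `U` be the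
set of vertices reachable from its head along edges other than `oe` with nonnegative flow.
Acyclicity keeps the tail of `oe` out of `U`, every other edge leaving `U` has negative flow,
so the inflow into `U` exceeds `δ_U`. With `φ = 1` on the cut, deleting the cut edges lowers
`K` by `deg_{E(W,Wᶜ)}` on both sides, and `Div(φ)` by `deg_{E(W,Wᶜ)}` on `W` but raises it by
as much on `Wᶜ`, which the correction of `D` on `Wᶜ` absorbs. For semistability on `Wᶜ`,
`β_{D₂}(U) = β_D(U ∪ W) - β_D(W) = β_D(U ∪ W)`. -/

namespace WGraph

def IsWalk (G : WGraph) : List G.OEdge → G.V → G.V → Prop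
  | [], x, y => x = y
  | oe :: L, x, y => G.osrc oe = x ∧ G.IsWalk L (G.otgt oe) y

def wverts (G : WGraph) (L : List G.OEdge) (x : G.V) : List G.V := x :: L.map G.otgt

variable {G : WGraph}

theorem osrc_eq_or_osrc_eq_otgt {oe oe' : G.OEdge} (h : oe.1 = oe'.1) :
    G.osrc oe = G.osrc oe' ∨ G.osrc oe = G.otgt oe' := by
  obtain ⟨e, b⟩ := oe
  obtain ⟨e', b'⟩ := oe'
  cases b <;> cases b' <;> simp_all [osrc, otgt]

theorem wverts_append (L₁ L₂ : List G.OEdge) (x : G.V) :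
    G.wverts (L₁ ++ L₂) x = G.wverts L₁ x ++ L₂.map G.otgt := by
  simp [wverts]

theorem otgt_mem_wverts {L : List G.OEdge} {oe : G.OEdge} (x : G.V) (hoe : oe ∈ L) :
    G.otgt oe ∈ G.wverts L x :=
  List.mem_cons_of_mem _ (List.mem_map_of_mem hoe)

namespace IsWalk

variable {L L₁ L₂ : List G.OEdge} {x y z : G.V}

@[simp] theorem nil_iff : G.IsWalk [] x y ↔ x = y := Iff.rfl

theorem append (h₁ : G.IsWalk L₁ x y) (h₂ : G.IsWalk L₂ y z) : G.IsWalk (L₁ ++ L₂) x z := by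
  induction L₁ generalizing x with
  | nil => subst h₁; exact h₂
  | cons oe L ih => exact ⟨h₁.1, ih h₁.2⟩

theorem map_osrc_append (h : G.IsWalk L x y) : L.map G.osrc ++ [y] = G.wverts L x := by
  induction L generalizing x with
  | nil => simp_all [wverts]
  | cons oe L ih =>
    simp only [List.map_cons, List.cons_append, ih h.2, h.1]
    rfl

theorem osrc_mem_wverts (h : G.IsWalk L x y) {oe : G.OEdge} (hoe : oe ∈ L) :
    G.osrc oe ∈ G.wverts L x := by
  rw [← h.map_osrc_append]
  exact List.mem_append_left _ (List.mem_map_of_mem hoe)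

theorem exists_prefix (h : G.IsWalk L x y) (hz : z ∈ G.wverts L x) :
    ∃ L₁ L₂, L = L₁ ++ L₂ ∧ G.IsWalk L₁ x z := by
  induction L generalizing x with
  | nil => exact ⟨[], [], rfl, by simpa [wverts, eq_comm] using hz⟩
  | cons oe L ih =>
    rcases List.mem_cons.1 hz with rfl | hz
    · exact ⟨[], oe :: L, rfl, rfl⟩
    · obtain ⟨L₁, L₂, rfl, h₁⟩ := ih h.2 hz
      exact ⟨oe :: L₁, L₂, rfl, h.1, h₁⟩

theorem nodup_edges (h : G.IsWalk L x y) (hnd : (G.wverts L x).Nodup) :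
    (L.map Prod.fst).Nodup := by
  induction L generalizing x with
  | nil => simp
  | cons oe L ih =>
    obtain ⟨hx, hL⟩ := h
    rw [wverts, List.map_cons, List.nodup_cons] at hnd
    obtain ⟨hxL, hnd⟩ := hnd
    refine List.nodup_cons.2 ⟨?_, ih hL hnd⟩
    intro hmem
    obtain ⟨oe', hoe', hfst⟩ := List.mem_map.1 hmem
    rcases osrc_eq_or_osrc_eq_otgt hfst.symm with hs | hs
    · exact hxL (hx ▸ hs ▸ hL.osrc_mem_wverts hoe')
    · exact hxL (hx ▸ hs ▸ otgt_mem_wverts _ hoe')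

theorem map_otgt_eq_rotate (h : G.IsWalk L x x) : L.map G.otgt = (L.map G.osrc).rotate 1 := by
  cases L with
  | nil => rfl
  | cons oe L =>
    obtain ⟨rfl, hL⟩ := h
    simp only [List.map_cons, List.rotate_cons_succ, List.rotate_zero, hL.map_osrc_append]
    rfl

theorem otgt_get_eq_osrc_get_succ (h : G.IsWalk L x x) (i : Fin L.length) :
    G.otgt (L.get i) = G.osrc (L.get ⟨((i : ℕ) + 1) % L.length, Nat.mod_lt _ i.pos⟩) := by
  have h' := List.getElem_of_eq h.map_otgt_eq_rotate (i := i) (by simp)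
  simpa using h'

end IsWalk

theorem isOrientedCycle_cons {oe : G.OEdge} {L : List G.OEdge}
    (h : G.IsWalk L (G.otgt oe) (G.osrc oe)) (hnd : (G.wverts L (G.otgt oe)).Nodup)
    (hne : ∀ oe' ∈ L, oe'.1 ≠ oe.1) : G.IsOrientedCycle (oe :: L) := by
  have hclosed : G.IsWalk (oe :: L) (G.osrc oe) (G.osrc oe) := ⟨rfl, h⟩
  refine ⟨List.cons_ne_nil _ _, ?_, ?_, hclosed.otgt_get_eq_osrc_get_succ⟩
  · refine List.nodup_cons.2 ⟨fun hmem => ?_, h.nodup_edges hnd⟩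
    obtain ⟨oe', hoe', hfst⟩ := List.mem_map.1 hmem
    exact hne oe' hoe' hfst
  · rw [← h.map_osrc_append, List.nodup_append_comm] at hnd
    simpa using hnd

theorem PhiReach.exists_path {φ : G.E → ℤ} {A : Finset G.E} {x y : G.V}
    (h : G.PhiReach φ A x y) :
    ∃ L, G.IsWalk L x y ∧ (G.wverts L x).Nodup ∧ ∀ oe ∈ L, oe.1 ∉ A ∧ 0 ≤ G.flowVal φ oe := by
  induction h with
  | refl => exact ⟨[], rfl, List.nodup_singleton _, by simp⟩
  | @tail c d _ hstep ih =>
    obtain ⟨L, hL, hnd, hedges⟩ := ih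
    obtain ⟨oe, hA, hnn, rfl, rfl⟩ := hstep
    by_cases hd : G.otgt oe ∈ G.wverts L x
    · obtain ⟨L₁, L₂, rfl, hL₁⟩ := hL.exists_prefix hd
      rw [wverts_append] at hnd
      exact ⟨L₁, hL₁, hnd.sublist (List.sublist_append_left _ _),
        fun oe' h' => hedges oe' (List.mem_append_left _ h')⟩
    · refine ⟨L ++ [oe], hL.append ⟨rfl, rfl⟩, ?_, ?_⟩
      · rw [wverts_append]
        simpa [List.nodup_append, hnd] using fun a ha (h : a = G.otgt oe) => hd (h ▸ ha)
      · intro oe' h'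
        rcases List.mem_append.1 h' with h' | h'
        · exact hedges oe' h'
        · rw [List.mem_singleton.1 h']
          exact ⟨hA, hnn⟩

theorem not_phiReach_osrc {φ : G.E → ℤ} (hacyc : G.Acyclic φ) {oe : G.OEdge}
    (hpos : 0 < G.flowVal φ oe) : ¬ G.PhiReach φ {oe.1} (G.otgt oe) (G.osrc oe) := by
  intro hreach
  obtain ⟨L, hL, hnd, hedges⟩ := hreach.exists_path
  refine hacyc ⟨oe :: L,
    isOrientedCycle_cons hL hnd fun oe' h' => by simpa using (hedges oe' h').1, ?_,
    oe, List.mem_cons_self, hpos⟩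
  intro oe' h'
  rcases List.mem_cons.1 h' with rfl | h'
  · exact hpos.le
  · exact (hedges oe' h').2

def flowInto (G : WGraph) (φ : G.E → ℤ) (U : Finset G.V) (e : G.E) : ℤ :=
  if G.tgt e ∈ U then φ e else -φ e

def inFlow (G : WGraph) (φ : G.E → ℤ) (U : Finset G.V) : ℤ :=
  ∑ e ∈ Finset.univ.filter (G.crossing U), G.flowInto φ U e

theorem delta_eq_sum_filter (U : Finset G.V) :
    (G.delta U : ℤ) = ∑ _e ∈ Finset.univ.filter (G.crossing U), 1 := by
  rw [delta, Finset.card_eq_sum_ones, Nat.cast_sum, Nat.cast_one]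

theorem sum_divOf (φ : G.E → ℤ) (U : Finset G.V) : ∑ v ∈ U, G.divOf φ v = G.inFlow φ U := by
  simp only [divOf, Finset.sum_sub_distrib]
  rw [Finset.sum_comm, Finset.sum_comm (s := U)]
  simp only [inFlow, Finset.sum_filter, ← Finset.sum_sub_distrib]
  refine Finset.sum_congr rfl fun e _ => ?_
  by_cases hs : G.src e ∈ U <;> by_cases ht : G.tgt e ∈ U <;> simp [crossing, flowInto, hs, ht]

theorem two_mul_beta_canPol {φ : G.E → ℤ} {D : G.V → ℤ}
    (heq : ∀ v, 2 * D v + G.divOf φ v = G.K v) (U : Finset G.V) :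
    2 * G.beta G.canPol D U = G.delta U - G.inFlow φ U := by
  have hK : ∑ v ∈ U, G.K v = 2 * ∑ v ∈ U, D v + G.inFlow φ U := by
    rw [← sum_divOf, Finset.mul_sum, ← Finset.sum_add_distrib]
    exact Finset.sum_congr rfl fun v _ => (heq v).symm
  have hKq : ∑ v ∈ U, (G.K v : ℚ) = 2 * ∑ v ∈ U, (D v : ℚ) + G.inFlow φ U := by
    exact_mod_cast hK
  simp only [beta, canPol, ← Finset.sum_div, hKq]
  ring

theorem inFlow_le_delta {φ : G.E → ℤ} {D : G.V → ℤ} (hss : G.Semistable G.canPol D)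
    (heq : ∀ v, 2 * D v + G.divOf φ v = G.K v) {U : Finset G.V} (hU : U ≠ Finset.univ) :
    G.inFlow φ U ≤ G.delta U := by
  have h := two_mul_beta_canPol heq U
  have := hss U hU
  exact_mod_cast (by linarith : (G.inFlow φ U : ℚ) ≤ G.delta U)

theorem inFlow_eq_delta {φ : G.E → ℤ} {D : G.V → ℤ}
    (heq : ∀ v, 2 * D v + G.divOf φ v = G.K v) {U : Finset G.V}
    (hβ : G.beta G.canPol D U = 0) : G.inFlow φ U = G.delta U := by
  have h := two_mul_beta_canPol heq U
  exact_mod_cast (by linarith : (G.inFlow φ U : ℚ) = G.delta U)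

theorem crossing_fst_iff {U : Finset G.V} {oe : G.OEdge} :
    G.crossing U oe.1 ↔ ((G.osrc oe ∈ U) ≠ (G.otgt oe ∈ U)) := by
  obtain ⟨e, _ | _⟩ := oe <;> simp [crossing, osrc, otgt, Iff.comm]

theorem flowInto_of_otgt_mem (φ : G.E → ℤ) {U : Finset G.V} {oe : G.OEdge}
    (hs : G.osrc oe ∉ U) (ht : G.otgt oe ∈ U) : G.flowInto φ U oe.1 = G.flowVal φ oe := by
  obtain ⟨e, _ | _⟩ := oe <;> simp_all [flowInto, flowVal, osrc, otgt]

theorem flowInto_of_osrc_mem (φ : G.E → ℤ) {U : Finset G.V} {oe : G.OEdge}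
    (hs : G.osrc oe ∈ U) (ht : G.otgt oe ∉ U) : G.flowInto φ U oe.1 = -G.flowVal φ oe := by
  obtain ⟨e, _ | _⟩ := oe <;> simp_all [flowInto, flowVal, osrc, otgt]

theorem exists_osrc_mem_of_crossing {U : Finset G.V} {e : G.E} (h : G.crossing U e) :
    ∃ b, G.osrc (e, b) ∈ U ∧ G.otgt (e, b) ∉ U := by
  by_cases hs : G.src e ∈ U
  · exact ⟨true, by simp_all [crossing, osrc, otgt]⟩
  · exact ⟨false, by simp_all [crossing, osrc, otgt]⟩

theorem flowInto_le_one {φ : G.E → ℤ} (hφ : ∀ oe, G.flowVal φ oe ≤ 1) (U : Finset G.V)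
    (e : G.E) : G.flowInto φ U e ≤ 1 := by
  unfold flowInto
  split_ifs
  · exact hφ (e, true)
  · exact hφ (e, false)

theorem flowVal_le_one {φ : G.E → ℤ} {D : G.V → ℤ} (hss : G.Semistable G.canPol D)
    (hacyc : G.Acyclic φ) (heq : ∀ v, 2 * D v + G.divOf φ v = G.K v) (oe : G.OEdge) :
    G.flowVal φ oe ≤ 1 := by
  by_contra! hlt
  set U := Finset.univ.filter (G.PhiReach φ {oe.1} (G.otgt oe))
  have hb : G.otgt oe ∈ U := Finset.mem_filter.2 ⟨Finset.mem_univ _, .refl⟩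
  have ha : G.osrc oe ∉ U := by simpa [U] using not_phiReach_osrc hacyc (by omega)
  have hclosed : ∀ oe' : G.OEdge, oe'.1 ≠ oe.1 → 0 ≤ G.flowVal φ oe' →
      G.osrc oe' ∈ U → G.otgt oe' ∈ U := by
    intro oe' hne hnn hs
    simp only [U, Finset.mem_filter, Finset.mem_univ, true_and] at hs ⊢
    exact hs.tail ⟨oe', by simpa using hne, hnn, rfl, rfl⟩
  have hinto : ∀ e ∈ Finset.univ.filter (G.crossing U), 1 ≤ G.flowInto φ U e := by
    intro e he
    obtain ⟨b, hs, ht⟩ := exists_osrc_mem_of_crossing (Finset.mem_filter.1 he).2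
    by_cases hoe : e = oe.1
    · subst hoe
      rw [flowInto_of_otgt_mem φ ha hb]
      omega
    · have hneg : G.flowVal φ (e, b) < 0 := by
        by_contra! hnn
        exact ht (hclosed (e, b) hoe hnn hs)
      rw [flowInto_of_osrc_mem φ hs ht]
      omega
  have hδ : (G.delta U : ℤ) < G.inFlow φ U := by
    rw [delta_eq_sum_filter, inFlow]
    refine Finset.sum_lt_sum hinto ⟨oe.1, ?_, ?_⟩
    · simp [crossing_fst_iff, ha, hb]
    · rw [flowInto_of_otgt_mem φ ha hb]
      exact hlt
  have hU : U ≠ Finset.univ := fun h => ha (h ▸ Finset.mem_univ _)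
  exact (inFlow_le_delta hss heq hU).not_gt hδ

theorem flowInto_eq_one_of_beta_eq_zero {φ : G.E → ℤ} {D : G.V → ℤ}
    (hss : G.Semistable G.canPol D) (hacyc : G.Acyclic φ)
    (heq : ∀ v, 2 * D v + G.divOf φ v = G.K v) {W : Finset G.V}
    (hβ : G.beta G.canPol D W = 0) {e : G.E} (he : G.crossing W e) :
    G.flowInto φ W e = 1 := by
  have hle : ∀ e ∈ Finset.univ.filter (G.crossing W), G.flowInto φ W e ≤ 1 :=
    fun e _ => flowInto_le_one (flowVal_le_one hss hacyc heq) W e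
  have hsum : ∑ e ∈ Finset.univ.filter (G.crossing W), G.flowInto φ W e =
      ∑ e ∈ Finset.univ.filter (G.crossing W), 1 := by
    rw [← inFlow, inFlow_eq_delta heq hβ, delta_eq_sum_filter]
  exact (Finset.sum_eq_sum_iff_of_le hle).1 hsum e (by simpa using he)

theorem sum_induce_edges {M : Type*} [AddCommMonoid M] (X : Finset G.V) (f : G.E → M) :
    ∑ e : (G.induce X).E, f e.1 = ∑ e, if G.src e ∈ X ∧ G.tgt e ∈ X then f e else 0 := by
  rw [← Finset.sum_filter]
  exact (Finset.sum_subtype _ (by simp) f).symm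

theorem deg_eq_sum (v : G.V) :
    (G.deg v : ℤ) = ∑ e, ((if G.src e = v then 1 else 0) + (if G.tgt e = v then 1 else 0)) := by
  simp only [deg, Finset.card_filter, Nat.cast_add, Nat.cast_sum, Finset.sum_add_distrib]
  simp

theorem degCross_eq_sum (X : Finset G.V) (v : G.V) :
    (G.degCross X v : ℤ) = ∑ e, if G.crossing X e then
      (if G.src e = v then 1 else 0) + (if G.tgt e = v then 1 else 0) else 0 := by
  simp only [degCross, Finset.card_filter, Nat.cast_add, Nat.cast_sum, ← Finset.sum_add_distrib]
  refine Finset.sum_congr rfl fun e _ => ?_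
  by_cases h : G.crossing X e <;> simp [h]

theorem sum_degCross (X A : Finset G.V) :
    ∑ v ∈ A, (G.degCross X v : ℤ) = ∑ e, if G.crossing X e then
      (if G.src e ∈ A then 1 else 0) + (if G.tgt e ∈ A then 1 else 0) else 0 := by
  simp only [degCross_eq_sum]
  rw [Finset.sum_comm]
  refine Finset.sum_congr rfl fun e _ => ?_
  split_ifs <;> simp [Finset.sum_add_distrib, *]

theorem crossing_compl (W : Finset G.V) : G.crossing Wᶜ = G.crossing W := by
  ext e
  simp [crossing, not_iff_not]

theorem degCross_compl (W : Finset G.V) (v : G.V) : G.degCross Wᶜ v = G.degCross W v := by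
  simp only [degCross, crossing_compl]

theorem flowInto_compl (φ : G.E → ℤ) (W : Finset G.V) (e : G.E) :
    G.flowInto φ Wᶜ e = -G.flowInto φ W e := by
  by_cases h : G.tgt e ∈ W <;> simp [flowInto, h]

theorem delta_eq_sum (U : Finset G.V) :
    (G.delta U : ℤ) = ∑ e, if G.crossing U e then 1 else 0 := by
  rw [delta_eq_sum_filter, Finset.sum_filter]

theorem beta_sub (μ : G.V → ℚ) (D c : G.V → ℤ) (A : Finset G.V) :
    G.beta μ (fun v => D v - c v) A = G.beta μ D A - ∑ v ∈ A, (c v : ℚ) := by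
  simp only [beta, Int.cast_sub, Finset.sum_sub_distrib]
  ring

theorem beta_union (μ : G.V → ℚ) (D : G.V → ℤ) {A W : Finset G.V} (h : Disjoint A W) :
    G.beta μ D (A ∪ W) = G.beta μ D A + G.beta μ D W - ∑ v ∈ A, (G.degCross W v : ℚ) := by
  have hδ : (G.delta (A ∪ W) : ℤ) =
      G.delta A + G.delta W - 2 * ∑ v ∈ A, (G.degCross W v : ℤ) := by
    simp only [delta_eq_sum, sum_degCross, Finset.mul_sum, ← Finset.sum_add_distrib,
      ← Finset.sum_sub_distrib]
    refine Finset.sum_congr rfl fun e _ => ?_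
    have hs : G.src e ∈ A → G.src e ∉ W := fun h' => Finset.disjoint_left.1 h h'
    have ht : G.tgt e ∈ A → G.tgt e ∉ W := fun h' => Finset.disjoint_left.1 h h'
    by_cases hsA : G.src e ∈ A <;> by_cases htA : G.tgt e ∈ A <;>
      by_cases hsW : G.src e ∈ W <;> by_cases htW : G.tgt e ∈ W <;> simp_all [crossing]
  have hδq : (G.delta (A ∪ W) : ℚ) =
      G.delta A + G.delta W - 2 * ∑ v ∈ A, (G.degCross W v : ℚ) := by
    exact_mod_cast hδ
  simp only [beta, Finset.sum_union h, hδq]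
  ring

def induceEmb (X : Finset G.V) : (G.induce X).V ↪ G.V := ⟨fun v => v.1, fun _ _ => Subtype.ext⟩

section Induce

variable {X : Finset G.V}

@[simp] theorem induce_src_eq_iff {e : (G.induce X).E} {v : (G.induce X).V} :
    (G.induce X).src e = v ↔ G.src e.1 = v.1 := Subtype.ext_iff

@[simp] theorem induce_tgt_eq_iff {e : (G.induce X).E} {v : (G.induce X).V} :
    (G.induce X).tgt e = v ↔ G.tgt e.1 = v.1 := Subtype.ext_iff

def liftOEdge (oe : (G.induce X).OEdge) : G.OEdge := (oe.1.1, oe.2)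

theorem induce_osrc_val (oe : (G.induce X).OEdge) :
    ((G.induce X).osrc oe).1 = G.osrc (liftOEdge oe) := by
  obtain ⟨e, _ | _⟩ := oe <;> rfl

theorem induce_otgt_val (oe : (G.induce X).OEdge) :
    ((G.induce X).otgt oe).1 = G.otgt (liftOEdge oe) := by
  obtain ⟨e, _ | _⟩ := oe <;> rfl

theorem induce_flowVal (φ : G.E → ℤ) (oe : (G.induce X).OEdge) :
    (G.induce X).flowVal (fun e => φ e.1) oe = G.flowVal φ (liftOEdge oe) := by
  obtain ⟨e, _ | _⟩ := oe <;> rfl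

theorem IsOrientedCycle.map_induce {c : List (G.induce X).OEdge}
    (hc : (G.induce X).IsOrientedCycle c) :
    G.IsOrientedCycle (c.map liftOEdge) := by
  obtain ⟨hne, hedges, hsrcs, hchain⟩ := hc
  refine ⟨by simpa using hne, ?_, ?_, fun i => ?_⟩
  · have := hedges.map (f := fun e : (G.induce X).E => e.1) fun _ _ => Subtype.ext
    rw [List.map_map] at this ⊢
    exact this
  · have := hsrcs.map (f := fun v : (G.induce X).V => v.1) fun _ _ => Subtype.ext
    rw [List.map_map] at this ⊢
    simpa only [Function.comp_def, induce_osrc_val] using this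
  · have := congrArg Subtype.val (hchain ⟨i, by simpa using i.isLt⟩)
    simpa [induce_osrc_val, induce_otgt_val] using this

theorem Acyclic.induce {φ : G.E → ℤ} (hacyc : G.Acyclic φ) :
    (G.induce X).Acyclic (fun e => φ e.1) := by
  rintro ⟨c, hc, hnn, oe, hoe, hpos⟩
  refine hacyc ⟨_, hc.map_induce, ?_, _, List.mem_map_of_mem hoe, by rwa [← induce_flowVal]⟩
  intro oe' h'
  obtain ⟨x, hx, rfl⟩ := List.mem_map.1 h'
  rw [← induce_flowVal]
  exact hnn x hx

theorem deg_induce (v : (G.induce X).V) :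
    ((G.induce X).deg v : ℤ) = G.deg v.1 - G.degCross X v.1 := by
  rw [deg_eq_sum, deg_eq_sum, degCross_eq_sum, ← Finset.sum_sub_distrib]
  simp only [induce_src_eq_iff, induce_tgt_eq_iff]
  rw [sum_induce_edges X fun e =>
    (if G.src e = v.1 then (1 : ℤ) else 0) + (if G.tgt e = v.1 then 1 else 0)]
  refine Finset.sum_congr rfl fun e _ => ?_
  have hv := v.2
  by_cases hs : G.src e ∈ X <;> by_cases ht : G.tgt e ∈ X <;>
    by_cases hsv : G.src e = v.1 <;> by_cases htv : G.tgt e = v.1 <;> simp_all [crossing]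

theorem K_induce (v : (G.induce X).V) : (G.induce X).K v = G.K v.1 - G.degCross X v.1 := by
  have hw : (G.induce X).w v = G.w v.1 := rfl
  rw [K, K, deg_induce, hw]
  ring

theorem divOf_induce {φ : G.E → ℤ} {c : ℤ} (hc : ∀ e, G.crossing X e → G.flowInto φ X e = c)
    (v : (G.induce X).V) :
    (G.induce X).divOf (fun e => φ e.1) v = G.divOf φ v.1 - c * G.degCross X v.1 := by
  simp only [divOf, induce_src_eq_iff, induce_tgt_eq_iff]
  rw [sum_induce_edges X fun e => if G.tgt e = v.1 then φ e else 0,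
    sum_induce_edges X fun e => if G.src e = v.1 then φ e else 0, degCross_eq_sum,
    Finset.mul_sum, ← Finset.sum_sub_distrib, ← Finset.sum_sub_distrib,
    ← Finset.sum_sub_distrib]
  refine Finset.sum_congr rfl fun e _ => ?_
  have hv := v.2
  have hce := hc e
  by_cases hs : G.src e ∈ X <;> by_cases ht : G.tgt e ∈ X <;>
    by_cases hsv : G.src e = v.1 <;> by_cases htv : G.tgt e = v.1 <;>
      simp_all [crossing, flowInto]

@[simp] theorem induceEmb_apply (v : (G.induce X).V) : induceEmb X v = v.1 := rfl

theorem mem_map_induceEmb {U : Finset (G.induce X).V} {v : (G.induce X).V} :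
    v.1 ∈ U.map (induceEmb X) ↔ v ∈ U :=
  Finset.mem_map' _

theorem delta_map_induceEmb (U : Finset (G.induce X).V) :
    (G.delta (U.map (induceEmb X)) : ℤ) =
      (G.induce X).delta U + ∑ v ∈ U.map (induceEmb X), (G.degCross X v : ℤ) := by
  set U' := U.map (induceEmb X)
  have hcross : ∀ e : (G.induce X).E, (G.induce X).crossing U e ↔ G.crossing U' e.1 := by
    intro e
    simp only [crossing, ← mem_map_induceEmb (U := U)]
    rfl
  rw [delta_eq_sum, delta_eq_sum, sum_degCross]
  simp only [hcross]
  rw [sum_induce_edges X fun e => if G.crossing U' e then 1 else 0, ← Finset.sum_add_distrib]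
  refine Finset.sum_congr rfl fun e _ => ?_
  have hsub : ∀ v ∈ U', v ∈ X := fun v hv => by
    obtain ⟨u, -, rfl⟩ := Finset.mem_map.1 hv
    exact u.2
  have hs := hsub (G.src e)
  have ht := hsub (G.tgt e)
  by_cases hsU : G.src e ∈ U' <;> by_cases htU : G.tgt e ∈ U' <;>
    by_cases hsX : G.src e ∈ X <;> by_cases htX : G.tgt e ∈ X <;> simp_all [crossing]

theorem beta_induce (μ : G.V → ℚ) (D : G.V → ℤ) (U : Finset (G.induce X).V) :
    (G.induce X).beta (fun v => μ v.1 - G.degCross X v.1 / 2) (fun v => D v.1) U =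
      G.beta μ D (U.map (induceEmb X)) := by
  have hδ : (G.delta (U.map (induceEmb X)) : ℚ) = (G.induce X).delta U +
      ∑ v ∈ U.map (induceEmb X), (G.degCross X v : ℚ) := by
    exact_mod_cast delta_map_induceEmb U
  rw [beta, beta, hδ]
  simp only [Finset.sum_map, induceEmb_apply, Finset.sum_sub_distrib, ← Finset.sum_div]
  ring

theorem Semistable.induce {μ : G.V → ℚ} {D : G.V → ℤ} (hss : G.Semistable μ D) :
    (G.induce X).Semistable (fun v => μ v.1 - G.degCross X v.1 / 2) (fun v => D v.1) := by
  intro U hU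
  obtain ⟨u, hu⟩ : ∃ u, u ∉ U := by simpa [Finset.eq_univ_iff_forall] using hU
  rw [beta_induce]
  exact hss _ fun h => hu (mem_map_induceEmb.1 (h ▸ Finset.mem_univ _))

theorem Semistable.induce_compl {μ : G.V → ℚ} {D : G.V → ℤ} {W : Finset G.V}
    (hss : G.Semistable μ D) (hβ : G.beta μ D W = 0) :
    (G.induce Wᶜ).Semistable (fun v => μ v.1 - G.degCross W v.1 / 2)
      (fun v => D v.1 - G.degCross W v.1) := by
  intro U hU
  obtain ⟨u, hu⟩ : ∃ u, u ∉ U := by simpa [Finset.eq_univ_iff_forall] using hU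
  set U' := U.map (induceEmb Wᶜ)
  have hdisj : Disjoint U' W := Finset.disjoint_left.2 fun v hv => by
    obtain ⟨v, -, rfl⟩ := Finset.mem_map.1 hv
    exact Finset.mem_compl.1 v.2
  have hβU := beta_induce (X := Wᶜ) μ (fun v => D v - G.degCross W v) U
  simp only [degCross_compl] at hβU
  rw [hβU, beta_sub]
  have hunion := beta_union μ D hdisj
  push_cast
  have hne : U' ∪ W ≠ Finset.univ := fun h => by
    have := h ▸ Finset.mem_univ u.1
    rcases Finset.mem_union.1 this with h' | h'
    · exact hu (mem_map_induceEmb.1 h')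
    · exact Finset.mem_compl.1 u.2 h'
  linarith [hss _ hne]

end Induce

end WGraph

theorem stmt13_general (G : WGraph) (D : G.V → ℤ)
    (hss : G.Semistable G.canPol D) (φ : G.E → ℤ) (hacyc : G.Acyclic φ)
    (heq : ∀ v, 2 * D v + G.divOf φ v = G.K v)
    (W : Finset G.V)
    (hbeta : G.beta G.canPol D W = 0) :
    ((G.induce W).Acyclic (fun e => φ e.1) ∧
      (∀ v : (G.induce W).V,
        2 * D v.1 + (G.induce W).divOf (fun e => φ e.1) v = (G.induce W).K v) ∧
      (G.induce W).Semistable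
        (fun v => G.canPol v.1 - (G.degCross W v.1 : ℚ) / 2) (fun v => D v.1)) ∧
    ((G.induce Wᶜ).Acyclic (fun e => φ e.1) ∧
      (∀ v : (G.induce Wᶜ).V,
        2 * (D v.1 - (G.degCross W v.1 : ℤ)) +
            (G.induce Wᶜ).divOf (fun e => φ e.1) v = (G.induce Wᶜ).K v) ∧
      (G.induce Wᶜ).Semistable
        (fun v => G.canPol v.1 - (G.degCross W v.1 : ℚ) / 2)
        (fun v => D v.1 - (G.degCross W v.1 : ℤ))) := by
  have hin : ∀ e, G.crossing W e → G.flowInto φ W e = 1 :=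
    fun _ he => WGraph.flowInto_eq_one_of_beta_eq_zero hss hacyc heq hbeta he
  have hout : ∀ e, G.crossing Wᶜ e → G.flowInto φ Wᶜ e = -1 := fun e he => by
    rw [WGraph.crossing_compl] at he
    rw [WGraph.flowInto_compl, hin e he]
  refine ⟨⟨hacyc.induce, fun v => ?_, hss.induce⟩,
    ⟨hacyc.induce, fun v => ?_, hss.induce_compl hbeta⟩⟩
  · rw [WGraph.divOf_induce hin, WGraph.K_induce]
    linarith [heq v.1]
  · rw [WGraph.divOf_induce hout, WGraph.K_induce, WGraph.degCross_compl]
    linarith [heq v.1]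

/-- If `D` is a semistable root divisor on a connected
graph (acyclic flow `φ` with `2D + Div(φ) = K_Γ`) and `β_D(V) = 0` for a
proper nonempty `V`, then the restrictions to the induced subgraphs on `V`
and `Vᶜ` (with the divisor corrected on `Vᶜ` by the crossing degree) are
again semistable root-graphs with respect to the canonical polarizations
`μᵢ(v) = μ(v) - deg_{E(V,Vᶜ)}(v)/2`. -/
theorem stmt13 (G : WGraph) (hconn : G.Connected) (D : G.V → ℤ)
    (hss : G.Semistable G.canPol D) (φ : G.E → ℤ) (hacyc : G.Acyclic φ)
    (heq : ∀ v, 2 * D v + G.divOf φ v = G.K v)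
    (W : Finset G.V) (hW : W ≠ Finset.univ) (hW' : W.Nonempty)
    (hbeta : G.beta G.canPol D W = 0) :
    ((G.induce W).Acyclic (fun e => φ e.1) ∧
      (∀ v : (G.induce W).V,
        2 * D v.1 + (G.induce W).divOf (fun e => φ e.1) v = (G.induce W).K v) ∧
      (G.induce W).Semistable
        (fun v => G.canPol v.1 - (G.degCross W v.1 : ℚ) / 2) (fun v => D v.1)) ∧
    ((G.induce Wᶜ).Acyclic (fun e => φ e.1) ∧
      (∀ v : (G.induce Wᶜ).V,
        2 * (D v.1 - (G.degCross W v.1 : ℤ)) +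
            (G.induce Wᶜ).divOf (fun e => φ e.1) v = (G.induce Wᶜ).K v) ∧
      (G.induce Wᶜ).Semistable
        (fun v => G.canPol v.1 - (G.degCross W v.1 : ℚ) / 2)
        (fun v => D v.1 - (G.degCross W v.1 : ℤ))) :=
  stmt13_general G D hss φ hacyc heq W hbeta
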